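/- arXiv:2602.11772 — 3 statements merged into one kernel-verified Lean document; each statement's English description precedes it below -/
import Mathlib

section
/- Let w > 0 satisfy ∑_{i ∈ BS(j)} c_i w_{ij} = ρ c_j for all j with c > 0, ρ > 0, and let M = ρ · (max_i c_i)/(min_i c_i) − 1. Then w_{ij} ≤ 1 + M for every arc (i,j) ∈ E. -/
/-- With `M = ρ (max_i c_i)/(min_i c_i) − 1`, every positive feasible
weight assignment satisfies `w_{ij} ≤ 1 + M` on every arc. -/
theorem weight_le_one_add_M
    (n : ℕ) (hn : 0 < n) (E : Finset (Fin n × Fin n))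
    (hBS : ∀ j : Fin n, (E.filter (fun e => e.2 = j)).Nonempty)
    (c : Fin n → ℝ) (hc : ∀ i, 0 < c i)
    (ρ : ℝ) (hρ : 0 < ρ)
    (w : Fin n × Fin n → ℝ) (hw : ∀ e ∈ E, 0 < w e)
    (heq : ∀ j : Fin n,
      ∑ e ∈ E.filter (fun e => e.2 = j), c e.1 * w e = ρ * c j)
    (M : ℝ)
    (hM : M = ρ * (Finset.univ.sup'
            (Finset.univ_nonempty_iff.mpr (Fin.pos_iff_nonempty.mp hn)) c) /
          (Finset.univ.inf'
            (Finset.univ_nonempty_iff.mpr (Fin.pos_iff_nonempty.mp hn)) c) - 1) :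
    ∀ e ∈ E, w e ≤ 1 + M := by
  intro e he
  have hne : (Finset.univ : Finset (Fin n)).Nonempty :=
    Finset.univ_nonempty_iff.mpr (Fin.pos_iff_nonempty.mp hn)
  set cmax := Finset.univ.sup' hne c with hcmax
  set cmin := Finset.univ.inf' hne c with hcmin
  have hminpos : 0 < cmin := by
    obtain ⟨i, _, hi⟩ := Finset.exists_mem_eq_inf' hne c
    rw [hcmin, hi]; exact hc i
  have h1M : 1 + M = ρ * cmax / cmin := by rw [hM]; ring
  rw [h1M]
  -- single term ≤ sum
  have hmem : e ∈ E.filter (fun e' => e'.2 = e.2) := by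
    simp [he]
  have hle : c e.1 * w e ≤ ∑ e' ∈ E.filter (fun e' => e'.2 = e.2), c e'.1 * w e' := by
    apply Finset.single_le_sum _ hmem
    intro x hx
    exact le_of_lt (mul_pos (hc x.1) (hw x (Finset.mem_filter.mp hx).1))
  rw [heq e.2] at hle
  have hcj : ρ * c e.2 ≤ ρ * cmax :=
    mul_le_mul_of_nonneg_left (Finset.le_sup' c (Finset.mem_univ e.2)) hρ.le
  have hmin : cmin ≤ c e.1 := Finset.inf'_le c (Finset.mem_univ e.1)
  have hnum : 0 ≤ ρ * cmax :=
    le_of_lt (mul_pos hρ ((hc e.1).trans_le (Finset.le_sup' c (Finset.mem_univ e.1))))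
  calc w e = c e.1 * w e / c e.1 :=
        (mul_div_cancel_left₀ _ (hc e.1).ne').symm
    _ ≤ ρ * cmax / c e.1 := by
        exact div_le_div₀ hnum (hle.trans hcj) (hc e.1) le_rfl
    _ ≤ ρ * cmax / cmin := by gcongr
end

section
/- Fix a node j with in-neighborhood BS(j) of size k, ordered so that c_{i_1} ≤ c_{i_2} ≤ … ≤ c_{i_k}, let ρ > 0, c > 0, and let 0 < ε < min{1, ρ c_j / ∑_{i ∈ BS(j)} c_i}. Define h = max{ h' ∈ {0,…,k−1} : ∑_{r=1}^{h'} c_{i_r} + ε ∑_{r=h'+1}^{k} c_{i_r} ≤ ρ c_j }. Suppose ρ c_j ≠ ∑_{i ∈ BS(j)} c_i. Then for any vector (w_{i j})_{i ∈ BS(j)} with w_{ij} ≥ ε for all i and ∑_{i ∈ BS(j)} c_i w_{ij} = ρ c_j, the number of indices i with w_{ij} = 1 is at most h. -/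
private lemma fin_strictMono_le {m k : ℕ} (f : Fin m → Fin k) (hf : StrictMono f) :
    ∀ n (hn : n < m), n ≤ (f ⟨n, hn⟩ : ℕ) := by
  intro n
  induction n with
  | zero => intro _; exact Nat.zero_le _
  | succ n ih =>
    intro hn
    have hn' : n < m := Nat.lt_of_succ_lt hn
    have h1 : f ⟨n, hn'⟩ < f ⟨n + 1, hn⟩ := hf (by simp [Fin.lt_def])
    have := ih hn'
    omega

private lemma sum_first_le {k : ℕ} (c : Fin k → ℝ) (hmono : Monotone c)
    (S : Finset (Fin k)) {m : ℕ} (hm : S.card = m) :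
    ∑ r ∈ Finset.univ.filter (fun r : Fin k => (r : ℕ) < m), c r ≤ ∑ r ∈ S, c r := by
  classical
  have hmk : m ≤ k := by
    rw [← hm]
    simpa using Finset.card_le_card (Finset.subset_univ S)
  have hTmap : Finset.univ.filter (fun r : Fin k => (r : ℕ) < m)
      = Finset.univ.map (Fin.castLEEmb hmk) := by
    ext r
    simp only [Finset.mem_filter, Finset.mem_univ, true_and, Finset.mem_map,
      Fin.castLEEmb_apply]
    constructor
    · intro hr; exact ⟨⟨r, hr⟩, rfl⟩
    · rintro ⟨i, rfl⟩; exact i.2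
  have hSmap : S = Finset.univ.map (S.orderEmbOfFin hm).toEmbedding := by
    ext r
    simp only [Finset.mem_map, Finset.mem_univ, true_and, RelEmbedding.coe_toEmbedding]
    constructor
    · intro hr
      have : r ∈ Set.range (S.orderEmbOfFin hm) := by
        rw [Finset.range_orderEmbOfFin]; exact hr
      exact this
    · rintro ⟨i, rfl⟩
      exact Finset.orderEmbOfFin_mem S hm i
  rw [hTmap, hSmap, Finset.sum_map, Finset.sum_map]
  apply Finset.sum_le_sum
  intro i _
  simp only [RelEmbedding.coe_toEmbedding, Fin.castLEEmb_apply]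
  apply hmono
  have := fin_strictMono_le (S.orderEmbOfFin hm) (S.orderEmbOfFin hm).strictMono i i.2
  simpa [Fin.le_def] using this

/-- Single-node lemma for problem (P6). Let `c : Fin k → ℝ` be the
(positive, non-decreasingly ordered) centralities of the in-neighbors of a fixed
node `j`, let `ρ, cj > 0`, `0 < ε < min{1, ρ cj / ∑ c}`, and assume
`ρ cj ≠ ∑ c`. If `h ≤ k−1` is the largest index with
`∑_{r<h} c_r + ε ∑_{r≥h} c_r ≤ ρ cj`, then any feasible weight vector
(`w ≥ ε` componentwise and `∑ c_r w_r = ρ cj`) has at most `h` components equal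
to 1. -/
theorem P6_at_most_h_ones
    (k : ℕ) (hk : 0 < k) (c : Fin k → ℝ)
    (hc : ∀ r, 0 < c r) (hmono : Monotone c)
    (ρ cj : ℝ) (hρ : 0 < ρ) (hcj : 0 < cj)
    (ε : ℝ) (hε : 0 < ε) (hε1 : ε < 1)
    (hεfeas : ε < ρ * cj / ∑ r, c r)
    (hne : ρ * cj ≠ ∑ r, c r)
    (h : ℕ) (hh : h ≤ k - 1)
    (hfeas : (∑ r : Fin k, if (r : ℕ) < h then c r else ε * c r) ≤ ρ * cj)
    (hmax : ∀ h' : ℕ, h' ≤ k - 1 →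
      (∑ r : Fin k, if (r : ℕ) < h' then c r else ε * c r) ≤ ρ * cj → h' ≤ h)
    (w : Fin k → ℝ) (hw : ∀ r, ε ≤ w r)
    (hweq : ∑ r, c r * w r = ρ * cj) :
    {r : Fin k | w r = 1}.ncard ≤ h := by
  classical
  set S : Finset (Fin k) := Finset.univ.filter (fun r => w r = 1) with hS
  have hset : {r : Fin k | w r = 1} = ↑S := by ext r; simp [hS]
  rw [hset, Set.ncard_coe_finset]
  set m := S.card with hm
  have hmk : m ≤ k := by simpa using Finset.card_le_card (Finset.subset_univ S)
  -- m ≠ k : otherwise all weights are 1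
  have hmne : m ≠ k := by
    intro hmkk
    have hSuniv : S = Finset.univ := Finset.eq_univ_of_card S (by simp [← hm, hmkk])
    have : ∀ r, w r = 1 := by
      intro r
      have : r ∈ S := hSuniv ▸ Finset.mem_univ r
      simpa [hS] using this
    apply hne
    rw [← hweq]
    simp [this]
  have hmlt : m < k := lt_of_le_of_ne hmk hmne
  -- key: ∑ over S of c + ε * ∑ over Sᶜ of c ≤ ρ * cj
  have key1 : (∑ r ∈ S, c r) + ∑ r ∈ Sᶜ, ε * c r ≤ ρ * cj := by
    rw [← hweq, ← Finset.sum_add_sum_compl S (fun r => c r * w r)]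
    apply add_le_add
    · apply le_of_eq
      apply Finset.sum_congr rfl
      intro r hr
      have : w r = 1 := by simpa [hS] using hr
      rw [this, mul_one]
    · apply Finset.sum_le_sum
      intro r _
      rw [mul_comm (c r) (w r)]
      exact mul_le_mul_of_nonneg_right (hw r) (hc r).le
  -- greedy(m) ≤ S-based sum
  set T : Finset (Fin k) := Finset.univ.filter (fun r : Fin k => (r : ℕ) < m) with hT
  have key2 : (∑ r : Fin k, if (r : ℕ) < m then c r else ε * c r)
      = (∑ r ∈ T, c r) + ∑ r ∈ Tᶜ, ε * c r := by
    have h2 : Finset.univ.filter (fun x : Fin k => ¬ (x : ℕ) < m) = Tᶜ := by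
      ext r; simp [hT]
    rw [Finset.sum_ite, h2, ← hT]
  have hTS : ∑ r ∈ T, c r ≤ ∑ r ∈ S, c r := sum_first_le c hmono S rfl
  -- rewrite both sides as ε * total + (1-ε) * partial
  have decomp : ∀ X : Finset (Fin k),
      (∑ r ∈ X, c r) + ∑ r ∈ Xᶜ, ε * c r
        = ε * (∑ r, c r) + (1 - ε) * ∑ r ∈ X, c r := by
    intro X
    have hc1 : ∑ r ∈ Xᶜ, c r = (∑ r, c r) - ∑ r ∈ X, c r := by
      have := Finset.sum_add_sum_compl X (fun r => c r)
      linarith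
    rw [← Finset.mul_sum, hc1]
    ring
  have key3 : (∑ r : Fin k, if (r : ℕ) < m then c r else ε * c r) ≤ ρ * cj := by
    rw [key2, decomp T]
    have : ε * (∑ r, c r) + (1 - ε) * ∑ r ∈ T, c r
        ≤ ε * (∑ r, c r) + (1 - ε) * ∑ r ∈ S, c r := by
      have h1ε : (0:ℝ) ≤ 1 - ε := by linarith
      nlinarith
    calc ε * (∑ r, c r) + (1 - ε) * ∑ r ∈ T, c r
        ≤ ε * (∑ r, c r) + (1 - ε) * ∑ r ∈ S, c r := this
      _ = (∑ r ∈ S, c r) + ∑ r ∈ Sᶜ, ε * c r := (decomp S).symm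
      _ ≤ ρ * cj := key1
  exact hmax m (by omega) key3
end

section
/- Fix a node j with in-neighborhood BS(j) of size k ordered so that c_{i_1} ≤ … ≤ c_{i_k}, let ρ > 0, c > 0, 0 < ε < min{1, ρ c_j / ∑_{i ∈ BS(j)} c_i}, assume ρ c_j ≠ ∑_{i ∈ BS(j)} c_i, and let h = max{ h' ≤ k−1 : ∑_{r ≤ h'} c_{i_r} + ε ∑_{r > h'} c_{i_r} ≤ ρ c_j }. Define w* by w*_{i_r j} = 1 for r ≤ h, w*_{i_{h+1} j} = ( ρ c_j − ∑_{s=1}^{h} c_{i_s} − ε ∑_{s=h+2}^{k} c_{i_s} ) / c_{i_{h+1}}, and w*_{i_r j} = ε for r ≥ h+2. Then w* satisfies w*_{ij} ≥ ε for all i ∈ BS(j) and ∑_{i ∈ BS(j)} c_i w*_{ij} = ρ c_j; moreover exactly h of its components equal 1, and w* maximizes the number of weights equal to 1 among all feasible vectors. -/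
private lemma strictMono_val_le {m : ℕ} (f : Fin m → ℕ) (hf : StrictMono f) :
    ∀ n (hn : n < m), n ≤ f ⟨n, hn⟩ := by
  intro n
  induction n with
  | zero => intro hn; exact Nat.zero_le _
  | succ n ih =>
    intro hn
    have h1 : n < m := Nat.lt_of_succ_lt hn
    have h2 : f ⟨n, h1⟩ < f ⟨n + 1, hn⟩ := hf (by simp [Fin.lt_def])
    have := ih h1
    omega

private lemma sum_initial_le {k : ℕ} (c : Fin k → ℝ) (hmono : Monotone c)
    (S : Finset (Fin k)) :
    (∑ r : Fin k, if (r : ℕ) < S.card then c r else 0) ≤ ∑ r ∈ S, c r := by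
  classical
  set m := S.card with hm
  have hmk : m ≤ k := by simpa using S.card_le_univ
  set e := S.orderIsoOfFin rfl with he
  have hkey : ∀ i : Fin m, (i : ℕ) ≤ ((e i : Fin k) : ℕ) := by
    intro i
    have hsm : StrictMono (fun i : Fin m => ((e i : Fin k) : ℕ)) := by
      intro a b hab
      exact e.strictMono hab
    have := strictMono_val_le _ hsm i i.isLt
    simpa using this
  have hleft : (∑ r : Fin k, if (r : ℕ) < m then c r else 0)
      = ∑ i : Fin m, c (Fin.castLE hmk i) := by
    rw [← Finset.sum_filter]
    have hset : Finset.univ.filter (fun r : Fin k => (r : ℕ) < m)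
        = Finset.univ.map (Fin.castLEEmb hmk) := by
      ext r
      simp only [Finset.mem_filter, Finset.mem_univ, true_and, Finset.mem_map]
      constructor
      · intro hr
        exact ⟨⟨(r : ℕ), hr⟩, by ext; simp⟩
      · rintro ⟨i, -, rfl⟩
        simpa using i.isLt
    rw [hset, Finset.sum_map]
    rfl
  have hright : (∑ r ∈ S, c r) = ∑ i : Fin m, c (e i) := by
    rw [← Finset.sum_coe_sort S c]
    exact (Fintype.sum_equiv e.toEquiv _ _ (fun i => rfl)).symm
  rw [hleft, hright]
  apply Finset.sum_le_sum
  intro i _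
  exact hmono (by simpa [Fin.le_def] using hkey i)

private lemma sum_tri {k : ℕ} (h : ℕ) (hhk : h < k) (f g : Fin k → ℝ) :
    (∑ r : Fin k, if (r : ℕ) < h then f r else g r)
      = (∑ r : Fin k, if (r : ℕ) < h then f r else 0) + g ⟨h, hhk⟩
        + (∑ r : Fin k, if h < (r : ℕ) then g r else 0) := by
  have hsplit : ∀ r : Fin k,
      (if (r : ℕ) < h then f r else g r)
        = (if (r : ℕ) < h then f r else 0) + (if (r : ℕ) = h then g r else 0)
          + (if h < (r : ℕ) then g r else 0) := by
    intro r
    rcases lt_trichotomy ((r : ℕ)) h with h1 | h1 | h1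
    · simp [h1, h1.ne, Nat.lt_asymm h1]
    · simp [h1]
    · simp [h1, h1.ne', Nat.lt_asymm h1]
  rw [Finset.sum_congr rfl fun r _ => hsplit r, Finset.sum_add_distrib,
    Finset.sum_add_distrib]
  congr 2
  rw [Finset.sum_eq_single (⟨h, hhk⟩ : Fin k)]
  · simp
  · intro b _ hb
    rw [if_neg]
    exact fun hvb => hb (Fin.ext hvb)
  · simp

/-- Closed-form optimal solution of (P6) at a single node. With the
setting of Statement 14 (`h` the greedy threshold index, `h < k`), the vector
`w*` with `w*_r = 1` for `r < h`,
`w*_h = (ρ cj − ∑_{s<h} c_s − ε ∑_{s>h} c_s)/c_h`, and `w*_r = ε` for `r > h`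
is feasible, has exactly `h` components equal to 1, and maximizes the number of
components equal to 1 among all feasible vectors. -/
theorem P6_closed_form_optimal
    (k : ℕ) (hk : 0 < k) (c : Fin k → ℝ)
    (hc : ∀ r, 0 < c r) (hmono : Monotone c)
    (ρ cj : ℝ) (hρ : 0 < ρ) (hcj : 0 < cj)
    (ε : ℝ) (hε : 0 < ε) (hε1 : ε < 1)
    (hεfeas : ε < ρ * cj / ∑ r, c r)
    (hne : ρ * cj ≠ ∑ r, c r)
    (h : ℕ) (hh : h ≤ k - 1) (hhk : h < k)
    (hfeas : (∑ r : Fin k, if (r : ℕ) < h then c r else ε * c r) ≤ ρ * cj)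
    (hmax : ∀ h' : ℕ, h' ≤ k - 1 →
      (∑ r : Fin k, if (r : ℕ) < h' then c r else ε * c r) ≤ ρ * cj → h' ≤ h)
    (wstar : Fin k → ℝ)
    (hwstar : wstar = fun r : Fin k =>
      if (r : ℕ) < h then 1
      else if (r : ℕ) = h then
        (ρ * cj - (∑ s : Fin k, if (s : ℕ) < h then c s else 0)
          - ε * (∑ s : Fin k, if h < (s : ℕ) then c s else 0)) / c ⟨h, hhk⟩
      else ε) :
    (∀ r, ε ≤ wstar r) ∧
    (∑ r, c r * wstar r = ρ * cj) ∧
    {r : Fin k | wstar r = 1}.ncard = h ∧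
    (∀ w : Fin k → ℝ, (∀ r, ε ≤ w r) → (∑ r, c r * w r = ρ * cj) →
      {r : Fin k | w r = 1}.ncard ≤ {r : Fin k | wstar r = 1}.ncard) := by
  classical
  set A := ∑ s : Fin k, if (s : ℕ) < h then c s else 0 with hA
  set B := ∑ s : Fin k, if h < (s : ℕ) then c s else 0 with hB
  set ch := c ⟨h, hhk⟩ with hch
  have hchpos : 0 < ch := hc _
  set wh := (ρ * cj - A - ε * B) / ch with hwh
  set T := ∑ r : Fin k, c r with hT
  -- total decomposition
  have hTdec : T = A + ch + B := by
    have := sum_tri h hhk c c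
    simpa using this
  -- hfeas rewritten
  have hDh : A + ε * ch + ε * B ≤ ρ * cj := by
    have heq : (∑ r : Fin k, if (r : ℕ) < h then c r else ε * c r)
        = A + ε * ch + ε * B := by
      have hl : (∑ r : Fin k, if h < (r : ℕ) then ε * c r else 0) = ε * B := by
        rw [hB, Finset.mul_sum]
        exact Finset.sum_congr rfl fun r _ => by split_ifs <;> ring
      rw [sum_tri h hhk c (fun r => ε * c r), hl, hch]
    rw [heq] at hfeas
    exact hfeas
  -- the h-th weight
  have hchwh : ch * wh = ρ * cj - A - ε * B := by
    rw [hwh, mul_comm, div_mul_cancel₀ _ (ne_of_gt hchpos)]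
  have hwhε : ε ≤ wh := by
    rw [hwh, le_div_iff₀ hchpos]
    nlinarith [hDh]
  -- Part 1: feasibility lower bounds
  have part1 : ∀ r, ε ≤ wstar r := by
    intro r
    simp only [hwstar]
    split_ifs with h1 h2
    · exact hε1.le
    · exact hwhε
    · exact le_rfl
  -- Part 2: equality constraint
  have part2 : ∑ r, c r * wstar r = ρ * cj := by
    have hptw : ∀ r : Fin k, c r * wstar r
        = if (r : ℕ) < h then c r else
            (if (r : ℕ) = h then c r * wh else ε * c r) := by
      intro r
      simp only [hwstar]
      split_ifs with h1 h2 <;> ring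
    rw [Finset.sum_congr rfl fun r _ => hptw r,
      sum_tri h hhk c (fun r => if (r : ℕ) = h then c r * wh else ε * c r)]
    have hmid : (if ((⟨h, hhk⟩ : Fin k) : ℕ) = h then c ⟨h, hhk⟩ * wh else ε * c ⟨h, hhk⟩)
        = ch * wh := by simp [hch]
    have hlast : (∑ r : Fin k, if h < (r : ℕ) then
        (if (r : ℕ) = h then c r * wh else ε * c r) else 0) = ε * B := by
      rw [hB, Finset.mul_sum]
      apply Finset.sum_congr rfl
      intro r _
      split_ifs with h1 h2 <;> first | (exfalso; omega) | ring
    rw [hmid, hlast, hchwh]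
    ring
  -- the set of ones for wstar
  have hwh1 : wh ≠ 1 := by
    intro hwh1
    have hsum1 : ρ * cj = A + ch + ε * B := by
      have := hchwh
      rw [hwh1, mul_one] at this
      linarith
    rcases Nat.lt_or_ge (h + 1) k with hc1 | hc1
    · -- h+1 < k : contradict maximality
      have hD1 : (∑ r : Fin k, if (r : ℕ) < h + 1 then c r else ε * c r)
          = A + ch + ε * B := by
        have hptw : ∀ r : Fin k, (if (r : ℕ) < h + 1 then c r else ε * c r)
            = if (r : ℕ) < h then c r else
                (if (r : ℕ) = h then c r else ε * c r) := by
          intro r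
          split_ifs with h1 h2 h3 h4 <;> first | rfl | (exfalso; omega)
        rw [Finset.sum_congr rfl fun r _ => hptw r,
          sum_tri h hhk c (fun r => if (r : ℕ) = h then c r else ε * c r)]
        have hlast : (∑ r : Fin k, if h < (r : ℕ) then
            (if (r : ℕ) = h then c r else ε * c r) else 0) = ε * B := by
          rw [hB, Finset.mul_sum]
          apply Finset.sum_congr rfl
          intro r _
          split_ifs with h1 h2 <;> first | (exfalso; omega) | ring
        rw [hlast]
        simp [hch]
        exact hA.symm
      have := hmax (h + 1) (by omega) (by rw [hD1]; linarith)
      omega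
    · -- h+1 = k : then B = 0 and ρcj = T, contradiction
      have hB0 : B = 0 := by
        rw [hB]
        apply Finset.sum_eq_zero
        intro r _
        rw [if_neg]
        have := r.isLt
        omega
      apply hne
      rw [hsum1, hTdec, hB0]
      ring
  have hset : {r : Fin k | wstar r = 1} = ↑(Finset.Iio (⟨h, hhk⟩ : Fin k)) := by
    ext r
    simp only [Set.mem_setOf_eq, Finset.coe_Iio, Set.mem_Iio, Fin.lt_def]
    simp only [hwstar]
    split_ifs with h1 h2
    · simp [h1]
    · constructor
      · intro hx; exact absurd hx hwh1
      · intro hx; exact absurd hx h1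
    · constructor
      · intro hx; exact absurd hx hε1.ne
      · intro hx; exact absurd hx h1
  have part3 : {r : Fin k | wstar r = 1}.ncard = h := by
    rw [hset, Set.ncard_coe_finset, Fin.card_Iio]
  refine ⟨part1, part2, part3, ?_⟩
  -- Part 4: optimality
  intro w hwε hwsum
  rw [part3]
  set S := Finset.univ.filter (fun r : Fin k => w r = 1) with hS
  have hsetw : {r : Fin k | w r = 1} = ↑S := by
    ext r; simp [hS]
  rw [hsetw, Set.ncard_coe_finset]
  set m := S.card with hm
  have hmk : m ≤ k := by simpa using S.card_le_univ
  -- lower bound on the constraint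
  have hsum_split : (∑ r ∈ S, c r * w r) + (∑ r ∈ Sᶜ, c r * w r) = ρ * cj := by
    rw [Finset.sum_add_sum_compl]
    exact hwsum
  have hS1 : ∑ r ∈ S, c r * w r = ∑ r ∈ S, c r := by
    apply Finset.sum_congr rfl
    intro r hr
    rw [hS, Finset.mem_filter] at hr
    rw [hr.2, mul_one]
  have hSc : ∑ r ∈ Sᶜ, ε * c r ≤ ∑ r ∈ Sᶜ, c r * w r := by
    apply Finset.sum_le_sum
    intro r _
    have := hwε r
    nlinarith [hc r]
  have hlow : (∑ r ∈ S, c r) + ε * (∑ r ∈ Sᶜ, c r) ≤ ρ * cj := by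
    rw [← Finset.mul_sum] at hSc
    calc (∑ r ∈ S, c r) + ε * (∑ r ∈ Sᶜ, c r)
        ≤ (∑ r ∈ S, c r * w r) + (∑ r ∈ Sᶜ, c r * w r) := by
          rw [hS1]; linarith
      _ = ρ * cj := hsum_split
  -- m ≠ k
  have hmne : m ≠ k := by
    intro hmk'
    have hSU : S = Finset.univ := by
      apply Finset.eq_univ_of_card
      rw [← hm, hmk']
      simp
    apply hne
    rw [← hwsum, hT]
    apply Finset.sum_congr rfl
    intro r _
    have hr : r ∈ S := hSU ▸ Finset.mem_univ r
    rw [hS, Finset.mem_filter] at hr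
    rw [hr.2, mul_one]
  -- D m ≤ ρ cj
  have hTsplit : (∑ r ∈ S, c r) + (∑ r ∈ Sᶜ, c r) = T := by
    rw [hT, Finset.sum_add_sum_compl]
  have hL : (∑ r : Fin k, if (r : ℕ) < m then c r else 0) ≤ ∑ r ∈ S, c r := by
    rw [hm]
    exact sum_initial_le c hmono S
  have hDm : (∑ r : Fin k, if (r : ℕ) < m then c r else ε * c r) ≤ ρ * cj := by
    have hDeq : (∑ r : Fin k, if (r : ℕ) < m then c r else ε * c r)
        = ε * T + (1 - ε) * (∑ r : Fin k, if (r : ℕ) < m then c r else 0) := by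
      rw [hT, Finset.mul_sum, Finset.mul_sum, ← Finset.sum_add_distrib]
      apply Finset.sum_congr rfl
      intro r _
      split_ifs <;> ring
    rw [hDeq]
    nlinarith [hL, hlow, hTsplit]
  have := hmax m (by omega) hDm
  exact this
end
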